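/- Let \(H = H_1 + H_2\) be a sum of two Hermitian matrices and let \(T_1(x) = e^{-iH_1 x}e^{-iH_2 x}\) be the first-order Trotter formula. Then for \(x \ge 0\), \(\|e^{-iHx} - T_1(x)\|_\infty \le \frac{x^2}{2}\,\|[H_1,H_2]\|_\infty\). -/

import Mathlib

open Matrix Complex
open scoped Kronecker ComplexOrder

/-- Schatten 1-norm (trace norm) of a complex square matrix. -/
noncomputable def traceNorm {n : Type*} [Fintype n] [DecidableEq n] (A : Matrix n n ℂ) : ℝ :=
  ((Matrix.posSemidef_conjTranspose_mul_self A).1.eigenvectorUnitary.1 *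
    Matrix.diagonal (((↑) : ℝ → ℂ) ∘ (√·) ∘ (Matrix.posSemidef_conjTranspose_mul_self A).1.eigenvalues) *
    (star (Matrix.posSemidef_conjTranspose_mul_self A).1.eigenvectorUnitary : Matrix n n ℂ)).trace.re

/-- Operator (spectral) norm of a complex square matrix. -/
noncomputable def opNorm {n : Type*} [Fintype n] [DecidableEq n] (A : Matrix n n ℂ) : ℝ :=
  ‖Matrix.toEuclideanCLM (𝕜 := ℂ) A‖

/-- Induced 1→1 norm of a superoperator (map on matrices). -/
noncomputable def indNorm {n : Type*} [Fintype n] [DecidableEq n]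
    (f : Matrix n n ℂ → Matrix n n ℂ) : ℝ :=
  sSup {y | ∃ X : Matrix n n ℂ, traceNorm X ≤ 1 ∧ y = traceNorm (f X)}

/-- Partial trace over the environment (second) tensor factor. -/
noncomputable def ptraceE {s e : Type*} [Fintype e]
    (A : Matrix (s × e) (s × e) ℂ) : Matrix s s ℂ :=
  Matrix.of fun i j => ∑ k, A (i, k) (j, k)

/-- A density matrix: positive semidefinite with unit trace. -/
def IsDensity {n : Type*} [Fintype n] [DecidableEq n] (ρ : Matrix n n ℂ) : Prop :=
  ρ.PosSemidef ∧ ρ.trace = 1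

/-- Commutator of matrices. -/
noncomputable def mcomm {n : Type*} [Fintype n] (A X : Matrix n n ℂ) : Matrix n n ℂ := A * X - X * A

/-! With `M = -iH₁` and `N = -iH₂` skew-adjoint, `t ↦ e^{(x-t)(M+N)} e^{tM} e^{tN}` interpolates
between `e^{x(M+N)}` and `e^{xM} e^{xN}`, and its derivative is
`e^{(x-t)(M+N)} [e^{tM}, N] e^{tN}`. Unitaries are isometries, so this has norm `‖[e^{tM}, N]‖`,
which the analogous interpolation `s ↦ e^{(t-s)M} N e^{sM}` bounds by `t ‖[M, N]‖`.
Integrating over `[0, x]` gives `x²/2 ‖[M, N]‖`. -/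

open NormedSpace Set

theorem norm_image_sub_le_of_norm_deriv_le_mul {E : Type*} [NormedAddCommGroup E]
    [NormedSpace ℝ E] {f f' : ℝ → E} {C x : ℝ} (hf : ∀ t, HasDerivAt f (f' t) t)
    (bound : ∀ t ∈ Ico 0 x, ‖f' t‖ ≤ C * t) (hx : 0 ≤ x) :
    ‖f x - f 0‖ ≤ C / 2 * x ^ 2 := by
  have hB (t : ℝ) : HasDerivAt (fun t => C / 2 * t ^ 2) (C * t) t :=
    ((hasDerivAt_pow 2 t).const_mul (C / 2)).congr_deriv (by push_cast; ring)
  exact image_norm_le_of_norm_deriv_right_le_deriv_boundary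
    (fun t _ => ((hf t).sub_const (f 0)).continuousAt.continuousWithinAt)
    (fun t _ => ((hf t).sub_const (f 0)).hasDerivWithinAt) (by simp) hB bound
    (right_mem_Icc.2 hx)

section CStarAlgebra

variable {A : Type*} [CStarAlgebra A]

theorem hasDerivAt_exp_const_sub_smul (M : A) (x t : ℝ) :
    HasDerivAt (fun s : ℝ => exp ((x - s) • M)) (-(exp ((x - t) • M) * M)) t :=
  ((hasDerivAt_exp_smul_const M (x - t)).scomp t ((hasDerivAt_id t).const_sub x)).congr_deriv
    (by simp)

theorem exp_smul_mem_unitary {M : A} (hM : M ∈ skewAdjoint A) (t : ℝ) :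
    exp (t • M) ∈ unitary A :=
  let +nondep : NormedAlgebra ℚ A := .restrictScalars ℚ ℂ A
  exp_mem_unitary_of_mem_skewAdjoint (skewAdjoint.smul_mem t hM)

theorem norm_commutator_exp_smul_le {M : A} (hM : M ∈ skewAdjoint A) (N : A) {t : ℝ}
    (ht : 0 ≤ t) : ‖exp (t • M) * N - N * exp (t • M)‖ ≤ t * ‖M * N - N * M‖ := by
  set g : ℝ → A := fun s => exp ((t - s) • M) * N * exp (s • M)
  have hg (s : ℝ) : HasDerivAt g (exp ((t - s) • M) * (N * M - M * N) * exp (s • M)) s :=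
    (((hasDerivAt_exp_const_sub_smul M t s).mul_const N).mul
      (hasDerivAt_exp_smul_const' M s)).congr_deriv (by
        simp only [mul_sub, sub_mul, neg_mul, mul_assoc]; abel)
  have hg_norm (s : ℝ) :
      ‖exp ((t - s) • M) * (N * M - M * N) * exp (s • M)‖ = ‖M * N - N * M‖ := by
    rw [CStarRing.norm_mul_mem_unitary _ (exp_smul_mem_unitary hM _),
      CStarRing.norm_mem_unitary_mul _ (exp_smul_mem_unitary hM _), norm_sub_rev]
  have key := norm_image_sub_le_of_norm_deriv_le_segment' (fun s _ => (hg s).hasDerivWithinAt)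
    (fun s _ => (hg_norm s).le) t (right_mem_Icc.2 ht)
  simp only [g, sub_self, sub_zero, zero_smul, NormedSpace.exp_zero, one_mul, mul_one] at key
  rwa [norm_sub_rev, mul_comm] at key

theorem norm_exp_smul_add_sub_exp_smul_mul_exp_smul_le {M N : A} (hM : M ∈ skewAdjoint A)
    (hN : N ∈ skewAdjoint A) {x : ℝ} (hx : 0 ≤ x) :
    ‖exp (x • (M + N)) - exp (x • M) * exp (x • N)‖ ≤ x ^ 2 / 2 * ‖M * N - N * M‖ := by
  set f : ℝ → A := fun t => exp ((x - t) • (M + N)) * (exp (t • M) * exp (t • N))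
  set f' : ℝ → A := fun t =>
    exp ((x - t) • (M + N)) * ((exp (t • M) * N - N * exp (t • M)) * exp (t • N))
  have hf (t : ℝ) : HasDerivAt f (f' t) t :=
    ((hasDerivAt_exp_const_sub_smul (M + N) x t).mul
      ((hasDerivAt_exp_smul_const' M t).mul (hasDerivAt_exp_smul_const' N t))).congr_deriv (by
        simp only [f', Pi.mul_apply, mul_sub, sub_mul, add_mul, mul_add, neg_mul, mul_assoc]; abel)
  have hf' : ∀ t ∈ Ico 0 x, ‖f' t‖ ≤ ‖M * N - N * M‖ * t := fun t ht => by
    rw [CStarRing.norm_mem_unitary_mul _ (exp_smul_mem_unitary (add_mem hM hN) _),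
      CStarRing.norm_mul_mem_unitary _ (exp_smul_mem_unitary hN _), mul_comm]
    exact norm_commutator_exp_smul_le hM N ht.1
  have key := norm_image_sub_le_of_norm_deriv_le_mul hf hf' hx
  simp only [f, sub_self, sub_zero, zero_smul, NormedSpace.exp_zero, one_mul, mul_one] at key
  rw [norm_sub_rev] at key
  linarith

theorem IsSelfAdjoint.norm_exp_add_sub_exp_mul_exp_le {a b : A} (ha : IsSelfAdjoint a)
    (hb : IsSelfAdjoint b) {x : ℝ} (hx : 0 ≤ x) :
    ‖NormedSpace.exp (((-I) * x) • (a + b)) -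
        NormedSpace.exp (((-I) * x) • a) * NormedSpace.exp (((-I) * x) • b)‖ ≤
      x ^ 2 / 2 * ‖a * b - b * a‖ := by
  have hskew {c : A} (hc : IsSelfAdjoint c) : (-I) • c ∈ skewAdjoint A :=
    hc.smul_mem_skewAdjoint (by simp [skewAdjoint.mem_iff])
  have hsmul (c : A) : ((-I) * x) • c = x • ((-I) • c) := by
    rw [mul_comm, mul_smul, Complex.coe_smul]
  have hcomm : (-I) • a * (-I) • b - (-I) • b * (-I) • a = -(a * b - b * a) := by
    simp only [smul_mul_smul_comm, ← smul_sub]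
    simp
  have key := norm_exp_smul_add_sub_exp_smul_mul_exp_smul_le (hskew ha) (hskew hb) hx
  rwa [← smul_add, hcomm, norm_neg, ← hsmul, ← hsmul, ← hsmul] at key

end CStarAlgebra

/-- First-order Trotter error bound with mcomm scaling:
‖e^{-i(H₁+H₂)x} - e^{-iH₁x}e^{-iH₂x}‖∞ ≤ (x²/2)‖[H₁,H₂]‖∞. -/
theorem stmt17 {n : Type*} [Fintype n] [DecidableEq n]
    (H₁ H₂ : Matrix n n ℂ) (h₁ : H₁.IsHermitian) (h₂ : H₂.IsHermitian) (x : ℝ) (hx : 0 ≤ x) :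
    opNorm (NormedSpace.exp (((-Complex.I) * x) • (H₁ + H₂)) -
        NormedSpace.exp (((-Complex.I) * x) • H₁) *
          NormedSpace.exp (((-Complex.I) * x) • H₂)) ≤
      x ^ 2 / 2 * opNorm (mcomm H₁ H₂) := by
  -- Under the L2-operator instances `opNorm` is definitionally the C⋆-norm, and the topology
  -- (hence `NormedSpace.exp`) is the usual one on matrices.
  open scoped Matrix.Norms.L2Operator in
  exact IsSelfAdjoint.norm_exp_add_sub_exp_mul_exp_le h₁.isSelfAdjoint h₂.isSelfAdjoint hx
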